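/- arXiv:2412.21001 — 2 statements merged into one kernel-verified Lean document; each statement's English description precedes it below -/
import Mathlib

section
/- Let X be a type (the state–action space), L and N positive natural numbers, R_max ≥ 0, and let R*, R̂ : X → ℝ satisfy |R*(x)| ≤ R_max and |R̂(x)| ≤ R_max for all x. For i = 1,…,N let σ₀^i, σ₁^i : {1,…,L} → X be pairs of trajectory segments of length L, and for a reward function R write r_R(σ) = Σ_{l=1}^L R(σ(l)). Let p_i = σ( r_{R̂}(σ₀^i) − r_{R̂}(σ₁^i) ) and q_i = σ( r_{R*}(σ₀^i) − r_{R*}(σ₁^i) ) be the Bradley–Terry probabilities that σ₀^i is preferred to σ₁^i under R̂ and R* respectively, where σ(x) = 1/(1+exp(−x)). If Σ_{i=1}^N (p_i − q_i)² ≤ E for some E ≥ 0, then Σ_{i=1}^N | ( r_{R*}(σ₀^i) − r_{R*}(σ₁^i) ) − ( r_{R̂}(σ₀^i) − r_{R̂}(σ₁^i) ) | ≤ ( (1 + e^{2LR_max})² / e^{2LR_max} ) · √(N·E). (Deterministic core of Proposition 3, combining Steps 1 and 2 of its proof: a bound on the sum of squared preference-probability gaps yields an ℓ¹ bound on the gaps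 between the reward-sum differences of the trajectory pairs, via the Cauchy–Schwarz inequality and the lower Lipschitz bound for the logistic function on [−2LR_max, 2LR_max].) -/
open Finset

lemma logistic_hasDerivAt (x : ℝ) :
    HasDerivAt (fun y => 1 / (1 + Real.exp (-y)))
      (Real.exp (-x) / (1 + Real.exp (-x)) ^ 2) x := by
  have h1 : HasDerivAt (fun y : ℝ => 1 + Real.exp (-y)) (-Real.exp (-x)) x := by
    have := (Real.hasDerivAt_exp (-x)).comp x (hasDerivAt_neg x)
    simpa [mul_comm] using (this.const_add 1)
  have hne : (1 + Real.exp (-x)) ≠ 0 := by positivity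
  have := h1.inv hne
  simp only [one_div]
  exact this.congr_deriv (by ring)

lemma logistic_gap (M a b : ℝ) (hab : b ≤ a)
    (ha : |a| ≤ M) (hb : |b| ≤ M) :
    a - b ≤ ((1 + Real.exp M) ^ 2 / Real.exp M) *
      (1 / (1 + Real.exp (-a)) - 1 / (1 + Real.exp (-b))) := by
  set m : ℝ := Real.exp M / (1 + Real.exp M) ^ 2 with hm
  have hmpos : 0 < m := by positivity
  have hd : ∀ y : ℝ, HasDerivAt (fun y => 1 / (1 + Real.exp (-y)) - m * y)
      (Real.exp (-y) / (1 + Real.exp (-y)) ^ 2 - m) y := fun y => by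
    exact ((logistic_hasDerivAt y).sub ((hasDerivAt_id y).const_mul m)).congr_deriv (by ring)
  have key : MonotoneOn (fun y => 1 / (1 + Real.exp (-y)) - m * y) (Set.Icc (-M) M) := by
    apply monotoneOn_of_deriv_nonneg (convex_Icc _ _)
    · exact Continuous.continuousOn (by
        have h2 : Continuous fun y : ℝ => 1 + Real.exp (-y) := by continuity
        exact (continuous_const.div h2 (fun y => by positivity)).sub
          (continuous_const.mul continuous_id))
    · intro y _
      exact (hd y).differentiableAt.differentiableWithinAt
    · intro y hy
      rw [interior_Icc] at hy
      rw [(hd y).deriv, sub_nonneg, hm]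
      have hy1 : Real.exp (-y) ≤ Real.exp M := Real.exp_le_exp.2 (by linarith [hy.1])
      have hy2 : Real.exp (-M) ≤ Real.exp (-y) := Real.exp_le_exp.2 (by linarith [hy.2])
      have hprod : Real.exp (-M) * Real.exp M = 1 := by
        rw [← Real.exp_add]; simp
      have hA : 0 < Real.exp (-y) := Real.exp_pos _
      have hB : 0 < Real.exp M := Real.exp_pos _
      rw [div_le_div_iff₀ (by positivity) (by positivity)]
      nlinarith [mul_nonneg (sub_nonneg.2 hy1) (sub_nonneg.2 (by nlinarith : (1:ℝ) ≤ Real.exp (-y) * Real.exp M))]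
  have hmem_a : a ∈ Set.Icc (-M) M := ⟨(abs_le.1 ha).1, (abs_le.1 ha).2⟩
  have hmem_b : b ∈ Set.Icc (-M) M := ⟨(abs_le.1 hb).1, (abs_le.1 hb).2⟩
  have := key hmem_b hmem_a hab
  simp only at this
  have hinv : (1 + Real.exp M) ^ 2 / Real.exp M = m⁻¹ := by
    rw [hm]; field_simp
  rw [hinv, ← div_eq_inv_mul, le_div_iff₀ hmpos]
  linarith

lemma logistic_gap_abs (M a b : ℝ) (ha : |a| ≤ M) (hb : |b| ≤ M) :
    |a - b| ≤ ((1 + Real.exp M) ^ 2 / Real.exp M) *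
      |1 / (1 + Real.exp (-a)) - 1 / (1 + Real.exp (-b))| := by
  have hC : 0 < (1 + Real.exp M) ^ 2 / Real.exp M := by positivity
  rcases le_total b a with h | h
  · have := logistic_gap M a b h ha hb
    have hfd : 0 ≤ 1 / (1 + Real.exp (-a)) - 1 / (1 + Real.exp (-b)) := by
      nlinarith [sub_nonneg.2 h]
    rw [abs_of_nonneg (sub_nonneg.2 h), abs_of_nonneg hfd]
    exact this
  · have := logistic_gap M b a h hb ha
    have hfd : 0 ≤ 1 / (1 + Real.exp (-b)) - 1 / (1 + Real.exp (-a)) := by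
      nlinarith [sub_nonneg.2 h]
    rw [abs_sub_comm, abs_sub_comm (1 / (1 + Real.exp (-a))),
      abs_of_nonneg (sub_nonneg.2 h), abs_of_nonneg hfd]
    exact this

/-- **Deterministic core of Proposition 3.** Let `Rstar` and `Rhat` be reward functions
on the state–action space `X`, bounded by `Rmax`, and let `σ₀ⁱ, σ₁ⁱ` (`i = 1,…,N`) be
pairs of trajectory segments of length `L`, with total reward `r_R(σ) = ∑_{l} R(σ(l))`.
Let `pᵢ` and `qᵢ` be the Bradley–Terry probabilities that `σ₀ⁱ` is preferred to `σ₁ⁱ`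
under `Rhat` and `Rstar` respectively, i.e. the logistic function `x ↦ 1/(1+e^{−x})`
evaluated at the reward-sum differences. If `∑ᵢ (pᵢ − qᵢ)² ≤ E`, then
`∑ᵢ |(r_{Rstar}(σ₀ⁱ) − r_{Rstar}(σ₁ⁱ)) − (r_{Rhat}(σ₀ⁱ) − r_{Rhat}(σ₁ⁱ))|
  ≤ ((1 + e^{2·L·Rmax})² / e^{2·L·Rmax}) · √(N·E)`,
via Cauchy–Schwarz and the lower Lipschitz bound for the logistic function on
`[−2·L·Rmax, 2·L·Rmax]`. -/
theorem preference_gap_to_reward_gap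
    {X : Type*} (L N : ℕ) (hL : 0 < L) (hN : 0 < N)
    (Rmax : ℝ) (hRmax : 0 ≤ Rmax)
    (Rstar Rhat : X → ℝ)
    (hRstar : ∀ x, |Rstar x| ≤ Rmax) (hRhat : ∀ x, |Rhat x| ≤ Rmax)
    (σ₀ σ₁ : Fin N → Fin L → X)
    (E : ℝ) (hE : 0 ≤ E)
    (hsum : ∑ i : Fin N,
        ((1 / (1 + Real.exp (-((∑ l, Rhat (σ₀ i l)) - ∑ l, Rhat (σ₁ i l))))
          - 1 / (1 + Real.exp (-((∑ l, Rstar (σ₀ i l)) - ∑ l, Rstar (σ₁ i l))))) ^ 2)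
        ≤ E) :
    ∑ i : Fin N,
        |((∑ l, Rstar (σ₀ i l)) - ∑ l, Rstar (σ₁ i l))
          - ((∑ l, Rhat (σ₀ i l)) - ∑ l, Rhat (σ₁ i l))|
      ≤ ((1 + Real.exp (2 * L * Rmax)) ^ 2 / Real.exp (2 * L * Rmax))
          * Real.sqrt (N * E) := by
  set M : ℝ := 2 * L * Rmax with hM
  set C : ℝ := (1 + Real.exp M) ^ 2 / Real.exp M with hC
  have hCpos : 0 < C := by positivity
  -- bound on each reward-sum difference
  have hbound : ∀ (R : X → ℝ), (∀ x, |R x| ≤ Rmax) → ∀ (σ τ : Fin L → X),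
      |(∑ l, R (σ l)) - ∑ l, R (τ l)| ≤ M := by
    intro R hR σ τ
    have h1 : |∑ l, R (σ l)| ≤ L * Rmax := by
      calc |∑ l, R (σ l)| ≤ ∑ l, |R (σ l)| := Finset.abs_sum_le_sum_abs _ _
        _ ≤ ∑ _l : Fin L, Rmax := Finset.sum_le_sum (fun l _ => hR _)
        _ = L * Rmax := by simp [mul_comm]
    have h2 : |∑ l, R (τ l)| ≤ L * Rmax := by
      calc |∑ l, R (τ l)| ≤ ∑ l, |R (τ l)| := Finset.abs_sum_le_sum_abs _ _
        _ ≤ ∑ _l : Fin L, Rmax := Finset.sum_le_sum (fun l _ => hR _)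
        _ = L * Rmax := by simp [mul_comm]
    have := abs_sub (∑ l, R (σ l)) (∑ l, R (τ l))
    rw [hM]; rw [abs_le] at h1 h2 ⊢
    constructor <;> linarith
  -- pointwise bound
  have hpt : ∀ i : Fin N,
      |((∑ l, Rstar (σ₀ i l)) - ∑ l, Rstar (σ₁ i l))
        - ((∑ l, Rhat (σ₀ i l)) - ∑ l, Rhat (σ₁ i l))|
      ≤ C * |1 / (1 + Real.exp (-((∑ l, Rhat (σ₀ i l)) - ∑ l, Rhat (σ₁ i l))))
          - 1 / (1 + Real.exp (-((∑ l, Rstar (σ₀ i l)) - ∑ l, Rstar (σ₁ i l))))| := by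
    intro i
    have := logistic_gap_abs M
      ((∑ l, Rstar (σ₀ i l)) - ∑ l, Rstar (σ₁ i l))
      ((∑ l, Rhat (σ₀ i l)) - ∑ l, Rhat (σ₁ i l))
      (hbound Rstar hRstar _ _) (hbound Rhat hRhat _ _)
    rw [abs_sub_comm (1 / (1 + Real.exp (-((∑ l, Rhat (σ₀ i l)) - ∑ l, Rhat (σ₁ i l)))))]
    exact this
  calc ∑ i : Fin N, |((∑ l, Rstar (σ₀ i l)) - ∑ l, Rstar (σ₁ i l))
          - ((∑ l, Rhat (σ₀ i l)) - ∑ l, Rhat (σ₁ i l))|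
      ≤ ∑ i : Fin N, C * |1 / (1 + Real.exp (-((∑ l, Rhat (σ₀ i l)) - ∑ l, Rhat (σ₁ i l))))
          - 1 / (1 + Real.exp (-((∑ l, Rstar (σ₀ i l)) - ∑ l, Rstar (σ₁ i l))))| :=
        Finset.sum_le_sum (fun i _ => hpt i)
    _ = C * ∑ i : Fin N, 1 * |1 / (1 + Real.exp (-((∑ l, Rhat (σ₀ i l)) - ∑ l, Rhat (σ₁ i l))))
          - 1 / (1 + Real.exp (-((∑ l, Rstar (σ₀ i l)) - ∑ l, Rstar (σ₁ i l))))| := by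
        rw [Finset.mul_sum]; simp
    _ ≤ C * (Real.sqrt (∑ _i : Fin N, (1:ℝ) ^ 2) *
          Real.sqrt (∑ i : Fin N,
            (|1 / (1 + Real.exp (-((∑ l, Rhat (σ₀ i l)) - ∑ l, Rhat (σ₁ i l))))
          - 1 / (1 + Real.exp (-((∑ l, Rstar (σ₀ i l)) - ∑ l, Rstar (σ₁ i l))))|) ^ 2)) := by
        apply mul_le_mul_of_nonneg_left _ hCpos.le
        exact Real.sum_mul_le_sqrt_mul_sqrt _ _ _
    _ ≤ C * Real.sqrt (N * E) := by
        apply mul_le_mul_of_nonneg_left _ hCpos.le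
        have h1 : Real.sqrt (∑ _i : Fin N, (1:ℝ) ^ 2) = Real.sqrt (N : ℝ) := by
          simp
        have h2 : (∑ i : Fin N,
            (|1 / (1 + Real.exp (-((∑ l, Rhat (σ₀ i l)) - ∑ l, Rhat (σ₁ i l))))
          - 1 / (1 + Real.exp (-((∑ l, Rstar (σ₀ i l)) - ∑ l, Rstar (σ₁ i l))))|) ^ 2) ≤ E := by
          simpa [sq_abs] using hsum
        rw [h1, ← Real.sqrt_mul (Nat.cast_nonneg N)]
        apply Real.sqrt_le_sqrt
        apply mul_le_mul_of_nonneg_left h2 (Nat.cast_nonneg N)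
end

section
/- Let (X, 𝓧) be a measurable space, let d_μ and d_π̂ be probability measures on X (the discounted state–action occupancy distributions of the behavior policy μ and of the learned policy π̂), let R*, R̂ : X → ℝ be bounded measurable functions (the true and the learned reward), and let γ ∈ (0,1). Define J_ν(R) = (1/(1−γ)) · ∫ R dν for a probability measure ν on X. Suppose: (i) J_{d_π̂}(R̂) ≥ J_{d_μ}(R̂) − ξ for some ξ ≥ 0 (the learned policy is ξ-approximately optimal for the learned reward relative to the behavior policy, the gap ξ coming from the offline RL algorithm itself); (ii) | ∫ (R* − R̂) d d_π̂ | ≤ 𝓒 · | ∫ (R* − R̂) d d_μ | for some 𝓒 ≥ 0 (the concentrability coefficient condition of Definition 3); and (iii) | ∫ (R* − R̂) d d_μ | ≤ ε for some ε ≥ 0 (the reward-model error under the offline data distribution). Then J_{d_μ}(R*) − J_{d_π̂}(R*) ≤ ξ + (1 + 𝓒)·ε / (1 − γ). (Deterministic decomposition underlying Theorem 2: the performance gap of the learned policy splits into the offline-algorithm gap ξ plus a term (1+𝓒)/(1−γ) times the reward-model error, which in Theorem 2 is instantiated, with probability at least 1−δ, by the bound √(4C·log(𝓝_𝓡(1/N)/δ)/(NL²))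 + √(4R_max²·log(1/δ)/(NL)) from Proposition 3.) -/
open MeasureTheory

/-- **Deterministic decomposition underlying Theorem 2.** Let `dμ` and `dπ̂` be the
discounted state–action occupancy distributions (probability measures on `X`) of the
behavior policy and of the learned policy, `Rstar`, `Rhat` the true and learned rewards
(bounded measurable), `γ ∈ (0,1)`, and `J_ν(R) = (1/(1−γ)) ∫ R dν`. If
(i) the learned policy is `ξ`-approximately optimal for the learned reward relative to
the behavior policy, (ii) the concentrability coefficient condition
`|∫ (Rstar − Rhat) d dπ̂| ≤ 𝓒·|∫ (Rstar − Rhat) d dμ|` holds, and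
(iii) the reward-model error under the offline data distribution is at most `ε`, then
`J_{dμ}(Rstar) − J_{dπ̂}(Rstar) ≤ ξ + (1 + 𝓒)·ε/(1 − γ)`. -/
theorem policy_improvement_decomposition
    {X : Type*} [MeasurableSpace X]
    (dμ dπ : Measure X) [IsProbabilityMeasure dμ] [IsProbabilityMeasure dπ]
    (Rstar Rhat : X → ℝ)
    (hmeas_star : Measurable Rstar) (hmeas_hat : Measurable Rhat)
    (Bstar : ℝ) (hbd_star : ∀ x, |Rstar x| ≤ Bstar)
    (Bhat : ℝ) (hbd_hat : ∀ x, |Rhat x| ≤ Bhat)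
    (γ : ℝ) (hγ : γ ∈ Set.Ioo (0 : ℝ) 1)
    (ξ : ℝ) (hξ : 0 ≤ ξ)
    (C ε : ℝ) (hC : 0 ≤ C) (hε : 0 ≤ ε)
    (hopt : (1 / (1 - γ)) * ∫ x, Rhat x ∂dπ ≥ (1 / (1 - γ)) * (∫ x, Rhat x ∂dμ) - ξ)
    (hconc : |∫ x, (Rstar x - Rhat x) ∂dπ| ≤ C * |∫ x, (Rstar x - Rhat x) ∂dμ|)
    (herr : |∫ x, (Rstar x - Rhat x) ∂dμ| ≤ ε) :
    (1 / (1 - γ)) * (∫ x, Rstar x ∂dμ) - (1 / (1 - γ)) * ∫ x, Rstar x ∂dπ ≤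
      ξ + (1 + C) * ε / (1 - γ) := by
  obtain ⟨hγ0, hγ1⟩ := hγ
  have hpos : (0:ℝ) < 1 - γ := by linarith
  have h1 : Integrable Rstar dμ :=
    (integrable_const Bstar).mono' hmeas_star.aestronglyMeasurable (ae_of_all _ hbd_star)
  have h2 : Integrable Rhat dμ :=
    (integrable_const Bhat).mono' hmeas_hat.aestronglyMeasurable (ae_of_all _ hbd_hat)
  have h3 : Integrable Rstar dπ :=
    (integrable_const Bstar).mono' hmeas_star.aestronglyMeasurable (ae_of_all _ hbd_star)
  have h4 : Integrable Rhat dπ :=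
    (integrable_const Bhat).mono' hmeas_hat.aestronglyMeasurable (ae_of_all _ hbd_hat)
  rw [integral_sub h1 h2] at herr
  rw [integral_sub h3 h4, integral_sub h1 h2] at hconc
  have hπ : |∫ x, Rstar x ∂dπ - ∫ x, Rhat x ∂dπ| ≤ C * ε := by
    calc _ ≤ C * |∫ x, Rstar x ∂dμ - ∫ x, Rhat x ∂dμ| := hconc
    _ ≤ C * ε := by exact mul_le_mul_of_nonneg_left herr hC
  rw [abs_le] at herr hπ
  have key : (∫ x, Rstar x ∂dμ) - ∫ x, Rstar x ∂dπ ≤ (1 - γ) * ξ + (1 + C) * ε := by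
    have h5 : (1 / (1 - γ)) * ((∫ x, Rhat x ∂dμ) - ∫ x, Rhat x ∂dπ) ≤ ξ := by
      rw [mul_sub]; linarith
    have hBB : (∫ x, Rhat x ∂dμ) - ∫ x, Rhat x ∂dπ ≤ (1 - γ) * ξ := by
      have h6 := mul_le_mul_of_nonneg_left h5 hpos.le
      rw [← mul_assoc] at h6
      rw [mul_one_div, div_self hpos.ne', one_mul] at h6
      exact h6
    linarith [herr.2, hπ.1]
  have h1γ : (1:ℝ)/(1-γ) = (1-γ)⁻¹ := one_div _
  calc (1 / (1 - γ)) * (∫ x, Rstar x ∂dμ) - (1 / (1 - γ)) * ∫ x, Rstar x ∂dπ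
      = (1 / (1 - γ)) * ((∫ x, Rstar x ∂dμ) - ∫ x, Rstar x ∂dπ) := by ring
    _ ≤ (1 / (1 - γ)) * ((1 - γ) * ξ + (1 + C) * ε) := by
        exact mul_le_mul_of_nonneg_left key (by positivity)
    _ = ξ + (1 + C) * ε / (1 - γ) := by field_simp
end
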